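/- arXiv:2507.13552 — 6 statements merged into one kernel-verified Lean document; each statement's English description precedes it below -/
import Mathlib

section
/- Let (Ω, F, ℙ) be a probability space, let 𝒳 and 𝒫 be finite sets, let X : Ω → 𝒳 and P : Ω → 𝒫 be random variables, fix x ∈ 𝒳, and let D_x : Ω → {0,1} (the potential decision at x) and D : Ω → {0,1} (the observed decision) be random variables such that D(ω) = D_x(ω) for every ω in the event {X = x}. Assume positivity: ℙ(X = x, P = p) > 0 for every p ∈ 𝒫. Assume conditional independence of the potential decision and X given P: for every p ∈ 𝒫, ℙ(D_x = 1 and X = x | P = p) = ℙ(D_x = 1 | P = p) · ℙ(X = x | P = p). Then the average structural function μ(x) := E[D_x] satisfies μ(x) = Σ_{p ∈ 𝒫} ℙ(D = 1 | X = x, P = p) · ℙ(P = p). -/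
/-!
Since `Dx` is `{0,1}`-valued, `E[Dx] = ℙ(Dx = 1)`, and this probability splits over the fibres
`{P = p}`. On each fibre, conditional independence says precisely that conditioning further on
`X = x` does not change `ℙ(Dx = 1 | P = p)`, and on `{X = x}` the potential decision `Dx`
coincides with the observed decision `D`.
-/

open MeasureTheory

/-- Conditional probability `ℙ(A | B) = ℙ(A ∩ B) / ℙ(B)` as a real number. -/
noncomputable def condPr {Ω : Type*} [MeasurableSpace Ω] (ℙ : Measure Ω) (A B : Set Ω) : ℝ :=
  (ℙ (A ∩ B)).toReal / (ℙ B).toReal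

namespace MeasureTheory

variable {Ω : Type*} [MeasurableSpace Ω] {μ : Measure Ω}

theorem integral_eq_measureReal_of_forall_eq_zero_or_one {f : Ω → ℝ} (hf : Measurable f)
    (h01 : ∀ ω, f ω = 0 ∨ f ω = 1) : ∫ ω, f ω ∂μ = μ.real {ω | f ω = 1} := by
  have hind : f = {ω | f ω = 1}.indicator 1 := by
    funext ω
    rcases h01 ω with h | h <;> simp [h]
  conv_lhs => rw [hind]
  exact integral_indicator_one (hf (measurableSet_singleton 1))

theorem measureReal_eq_sum_inter_preimage_singleton [IsFiniteMeasure μ] {β : Type*} [Fintype β]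
    [MeasurableSpace β] [MeasurableSingletonClass β] {g : Ω → β} (hg : Measurable g)
    (A : Set Ω) : μ.real A = ∑ b, μ.real (A ∩ g ⁻¹' {b}) := by
  have h := sum_measureReal_preimage_singleton (μ := μ.restrict A) Finset.univ
    (fun b _ => hg (measurableSet_singleton b))
  simpa [measureReal_restrict_apply (hg (measurableSet_singleton _)), Set.inter_comm] using h.symm

end MeasureTheory

section condPr

variable {Ω : Type*} [MeasurableSpace Ω] {μ : Measure Ω}

theorem condPr_congr_left {A A' B : Set Ω} (h : A ∩ B = A' ∩ B) :
    condPr μ A B = condPr μ A' B := by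
  rw [condPr, condPr, h]

theorem condPr_eq_condPr_inter_of_condIndep [IsFiniteMeasure μ] {A B C : Set Ω}
    (hBC : 0 < μ (B ∩ C)) (hCI : condPr μ (A ∩ B) C = condPr μ A C * condPr μ B C) :
    condPr μ A C = condPr μ A (B ∩ C) := by
  have hBC' : 0 < μ.real (B ∩ C) := ENNReal.toReal_pos hBC.ne' (measure_ne_top μ _)
  have hC : 0 < μ.real C := hBC'.trans_le (measureReal_mono Set.inter_subset_right)
  simp only [condPr, ← measureReal_def, Set.inter_assoc] at hCI ⊢
  field_simp at hCI ⊢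
  linarith

end condPr

theorem stmt0_general {Ω XS PS : Type*} [MeasurableSpace Ω]
    [Fintype PS]
    [MeasurableSpace PS] [MeasurableSingletonClass PS]
    (ℙ : Measure Ω) [IsProbabilityMeasure ℙ]
    (X : Ω → XS) (P : Ω → PS) (hP : Measurable P)
    (x : XS) (Dx D : Ω → ℝ) (hDx : Measurable Dx)
    (hDx01 : ∀ ω, Dx ω = 0 ∨ Dx ω = 1)
    (hagree : ∀ ω, X ω = x → D ω = Dx ω)
    (hpos : ∀ p : PS, 0 < ℙ {ω | X ω = x ∧ P ω = p})
    (hCI : ∀ p : PS,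
      condPr ℙ {ω | Dx ω = 1 ∧ X ω = x} {ω | P ω = p} =
        condPr ℙ {ω | Dx ω = 1} {ω | P ω = p} * condPr ℙ {ω | X ω = x} {ω | P ω = p}) :
    ∫ ω, Dx ω ∂ℙ =
      ∑ p : PS, condPr ℙ {ω | D ω = 1} {ω | X ω = x ∧ P ω = p} * (ℙ {ω | P ω = p}).toReal := by
  rw [integral_eq_measureReal_of_forall_eq_zero_or_one hDx hDx01,
    measureReal_eq_sum_inter_preimage_singleton hP]
  refine Finset.sum_congr rfl fun p _ => ?_
  have hP_pos : 0 < ℙ.real {ω | P ω = p} :=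
    ENNReal.toReal_pos ((hpos p).trans_le (measure_mono fun _ h => h.2)).ne' (measure_ne_top ℙ _)
  have hD_eq_Dx : {ω | D ω = 1} ∩ {ω | X ω = x ∧ P ω = p} =
      {ω | Dx ω = 1} ∩ {ω | X ω = x ∧ P ω = p} := by
    ext ω
    simp +contextual [hagree ω]
  calc ℙ.real ({ω | Dx ω = 1} ∩ P ⁻¹' {p})
      = condPr ℙ {ω | Dx ω = 1} {ω | P ω = p} * ℙ.real {ω | P ω = p} :=
        (div_mul_cancel₀ _ hP_pos.ne').symm
    _ = condPr ℙ {ω | Dx ω = 1} ({ω | X ω = x} ∩ {ω | P ω = p}) * ℙ.real {ω | P ω = p} :=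
        congrArg (· * _) (condPr_eq_condPr_inter_of_condIndep (hpos p) (hCI p))
    _ = condPr ℙ {ω | D ω = 1} {ω | X ω = x ∧ P ω = p} * ℙ.real {ω | P ω = p} :=
        congrArg (· * _) (condPr_congr_left hD_eq_Dx).symm

/-- Identification of the average structural function (discrete support version):
if the potential decision `Dx` is conditionally independent of `X` given the stated
report `P`, then `μ(x) = E[Dx] = Σ_p ℙ(D = 1 | X = x, P = p) ℙ(P = p)`. -/
theorem stmt0 {Ω XS PS : Type*} [MeasurableSpace Ω]
    [Fintype XS] [Fintype PS]
    [MeasurableSpace XS] [MeasurableSingletonClass XS]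
    [MeasurableSpace PS] [MeasurableSingletonClass PS]
    (ℙ : Measure Ω) [IsProbabilityMeasure ℙ]
    (X : Ω → XS) (P : Ω → PS) (hX : Measurable X) (hP : Measurable P)
    (x : XS) (Dx D : Ω → ℝ) (hDx : Measurable Dx) (hD : Measurable D)
    (hDx01 : ∀ ω, Dx ω = 0 ∨ Dx ω = 1) (hD01 : ∀ ω, D ω = 0 ∨ D ω = 1)
    (hagree : ∀ ω, X ω = x → D ω = Dx ω)
    (hpos : ∀ p : PS, 0 < ℙ {ω | X ω = x ∧ P ω = p})
    (hCI : ∀ p : PS,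
      condPr ℙ {ω | Dx ω = 1 ∧ X ω = x} {ω | P ω = p} =
        condPr ℙ {ω | Dx ω = 1} {ω | P ω = p} * condPr ℙ {ω | X ω = x} {ω | P ω = p}) :
    ∫ ω, Dx ω ∂ℙ =
      ∑ p : PS, condPr ℙ {ω | D ω = 1} {ω | X ω = x ∧ P ω = p} * (ℙ {ω | P ω = p}).toReal :=
  stmt0_general ℙ X P hP x Dx D hDx hDx01 hagree hpos hCI
end

section
/- Let (Ω, F, ℙ) be a probability space, let Y : Ω → ℝ be integrable, and let D : Ω → ℝ be measurable with D(ω) ∈ {0,1} for all ω. Then for every φ ∈ ℝ: E[min(Y − φ, 0)] + φ·E[D] ≤ E[Y·D] ≤ E[max(Y + φ, 0)] − φ·E[D]. (All expectations are well defined since |Y·D| ≤ |Y|, |min(Y−φ,0)| ≤ |Y| + |φ|, and |max(Y+φ,0)| ≤ |Y| + |φ|.) -/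
open MeasureTheory

lemma min_sub_add_mul_le_mul {y d : ℝ} (φ : ℝ) (hd : d = 0 ∨ d = 1) :
    min (y - φ) 0 + φ * d ≤ y * d := by
  rcases hd with rfl | rfl
  · simp
  · linarith [min_le_left (y - φ) 0]

lemma mul_le_max_add_sub_mul {y d : ℝ} (φ : ℝ) (hd : d = 0 ∨ d = 1) :
    y * d ≤ max (y + φ) 0 - φ * d := by
  rcases hd with rfl | rfl
  · simp
  · linarith [le_max_left (y + φ) 0]

section BinaryIntegrand

variable {Ω : Type*} [MeasurableSpace Ω] {μ : Measure Ω} {D : Ω → ℝ}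

lemma ae_norm_le_one_of_eq_zero_or_eq_one (hD01 : ∀ ω, D ω = 0 ∨ D ω = 1) :
    ∀ᵐ ω ∂μ, ‖D ω‖ ≤ 1 :=
  Filter.Eventually.of_forall fun ω => by rcases hD01 ω with h | h <;> simp [h]

lemma integrable_of_eq_zero_or_eq_one [IsFiniteMeasure μ] (hD : Measurable D)
    (hD01 : ∀ ω, D ω = 0 ∨ D ω = 1) : Integrable D μ :=
  (integrable_const (1 : ℝ)).mono' hD.aestronglyMeasurable
    (ae_norm_le_one_of_eq_zero_or_eq_one hD01)

lemma MeasureTheory.Integrable.mul_of_eq_zero_or_eq_one {Y : Ω → ℝ} (hY : Integrable Y μ)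
    (hD : Measurable D) (hD01 : ∀ ω, D ω = 0 ∨ D ω = 1) :
    Integrable (fun ω => Y ω * D ω) μ :=
  hY.mul_bdd hD.aestronglyMeasurable (ae_norm_le_one_of_eq_zero_or_eq_one hD01)

end BinaryIntegrand

/-- Weak duality bounds: for integrable `Y` and binary `D`, for every `φ ∈ ℝ`,
`E[min(Y − φ, 0)] + φ E[D] ≤ E[Y D] ≤ E[max(Y + φ, 0)] − φ E[D]`. -/
theorem stmt2 {Ω : Type*} [MeasurableSpace Ω] (ℙ : Measure Ω) [IsProbabilityMeasure ℙ]
    (Y D : Ω → ℝ) (hY : Integrable Y ℙ) (hD : Measurable D)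
    (hD01 : ∀ ω, D ω = 0 ∨ D ω = 1) (φ : ℝ) :
    (∫ ω, min (Y ω - φ) 0 ∂ℙ) + φ * ∫ ω, D ω ∂ℙ ≤ ∫ ω, Y ω * D ω ∂ℙ ∧
      ∫ ω, Y ω * D ω ∂ℙ ≤ (∫ ω, max (Y ω + φ) 0 ∂ℙ) - φ * ∫ ω, D ω ∂ℙ := by
  have hφD : Integrable (fun ω => φ * D ω) ℙ :=
    (integrable_of_eq_zero_or_eq_one hD hD01).const_mul φ
  have hYD := hY.mul_of_eq_zero_or_eq_one hD hD01
  have hmin : Integrable (fun ω => min (Y ω - φ) 0) ℙ :=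
    (hY.sub (integrable_const φ)).inf (integrable_const 0)
  have hmax : Integrable (fun ω => max (Y ω + φ) 0) ℙ :=
    (hY.add (integrable_const φ)).sup (integrable_const 0)
  constructor
  · rw [← integral_const_mul, ← integral_add hmin hφD]
    exact integral_mono (hmin.add hφD) hYD fun ω => min_sub_add_mul_le_mul φ (hD01 ω)
  · rw [← integral_const_mul, ← integral_sub hmax hφD]
    exact integral_mono hYD (hmax.sub hφD) fun ω => mul_le_max_add_sub_mul φ (hD01 ω)
end

section
/- Let ν be a probability measure on ℝ such that the identity function y ↦ y is ν-integrable, and let q ∈ [0,1]. Let Π be the set of probability measures π on ℝ × Bool such that the pushforward of π under the first projection equals ν and π(ℝ × {true}) = q. Then sup_{π ∈ Π} ∫ y · 1{d = true} dπ(y, d) = inf_{φ ∈ ℝ} ( φ·q + ∫ max(y − φ, 0) dν(y) ). -/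
/-!
A coupling `π` enters only through the sub-measure `μ ≤ ν` it puts on `{d = true}`, which has
mass `q` and contributes `∫ y dμ`; conversely every such `μ` arises from a coupling. For these
sub-measures `∫ y dμ = φ q + ∫ (y - φ) dμ ≤ φ q + ∫ (y - φ)⁺ dν` for every `φ` (weak duality),
with equality when `φ` is a `q`-upper quantile of `ν` and `μ` is `ν` on `(φ, ∞)` plus part of the
atom at `φ`. For `q ∈ {0, 1}` no such quantile need exist, and the dual value is approached as
`φ → ±∞` by dominated convergence instead.
-/

open MeasureTheory Set Filter Topology ProbabilityTheory
open scoped NNReal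

noncomputable def dualObjective (ν : Measure ℝ) (q φ : ℝ) : ℝ := φ * q + ∫ y, max (y - φ) 0 ∂ν

lemma smul_measure_le_self {α : Type*} [MeasurableSpace α] (μ : Measure α) {c : ℝ≥0}
    (hc : c ≤ 1) : c • μ ≤ μ :=
  Measure.le_iff'.mpr fun s => by
    rw [Measure.coe_nnreal_smul_apply]
    exact mul_le_of_le_one_left zero_le (ENNReal.coe_le_one_iff.mpr hc)

lemma tendsto_integral_max_sub_atTop {α : Type*} [MeasurableSpace α] {μ : Measure α}
    {f : α → ℝ} (hf : Integrable f μ) :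
    Tendsto (fun t => ∫ x, max (f x - t) 0 ∂μ) atTop (𝓝 0) := by
  have hlim := tendsto_integral_filter_of_dominated_convergence (F := fun t x => max (f x - t) 0)
    (fun x => |f x|)
    (Eventually.of_forall fun t =>
      (hf.aestronglyMeasurable.sub aestronglyMeasurable_const).sup aestronglyMeasurable_const)
    ((eventually_ge_atTop 0).mono fun t ht => ae_of_all _ fun x => by
      rw [Real.norm_of_nonneg (le_max_right _ _)]
      exact max_le (by linarith [le_abs_self (f x)]) (abs_nonneg _))
    hf.abs
    (ae_of_all _ fun x => tendsto_const_nhds.congr' <|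
      (eventually_ge_atTop (f x)).mono fun t ht => (max_eq_right (by linarith)).symm)
  simpa using hlim

lemma exists_measureReal_Ioi_le_le_measureReal_Ici (ν : Measure ℝ) [IsProbabilityMeasure ν]
    {q : ℝ} (hq0 : 0 < q) (hq1 : q < 1) :
    ∃ φ, ν.real (Ioi φ) ≤ q ∧ q ≤ ν.real (Ici φ) := by
  set S := {x | 1 - q ≤ cdf ν x}
  have hS : S.Nonempty :=
    ((tendsto_cdf_atTop ν).eventually (eventually_gt_nhds (by linarith))).exists.imp
      fun _ => le_of_lt
  obtain ⟨a, ha⟩ := eventually_atBot.mp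
    ((tendsto_cdf_atBot ν).eventually (eventually_lt_nhds (by linarith : (0 : ℝ) < 1 - q)))
  have hSbdd : BddBelow S := ⟨a, fun x hx => not_lt.mp fun hxa => (ha x hxa.le).not_ge hx⟩
  refine ⟨sInf S, ?_, ?_⟩
  · have hφ : 1 - q ≤ cdf ν (sInf S) := by
      refine ge_of_tendsto ((cdf ν).right_continuous _ |>.mono Ioi_subset_Ici_self)
        (eventually_nhdsWithin_of_forall fun x hx => ?_)
      obtain ⟨s, hs, hsx⟩ := exists_lt_of_csInf_lt hS hx
      exact hs.trans (monotone_cdf ν hsx.le)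
    rw [← compl_Iic, probReal_compl_eq_one_sub measurableSet_Iic, ← cdf_eq_real]
    linarith
  · have hφ : Function.leftLim (cdf ν) (sInf S) ≤ 1 - q :=
      le_of_tendsto ((monotone_cdf ν).tendsto_leftLim _)
        (eventually_nhdsWithin_of_forall fun x hx =>
          (not_le.mp fun h : x ∈ S => notMem_of_lt_csInf hx hSbdd h).le)
    have hIio : ν.real (Iio (sInf S)) = Function.leftLim (cdf ν) (sInf S) := by
      have h := (cdf ν).measure_Iio (tendsto_cdf_atBot ν) (sInf S)
      rw [measure_cdf, sub_zero] at h
      rw [measureReal_def, h, ENNReal.toReal_ofReal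
          ((cdf_nonneg ν _).trans ((monotone_cdf ν).le_leftLim (sub_one_lt _)))]
    rw [← compl_Iio, probReal_compl_eq_one_sub measurableSet_Iio, hIio]
    linarith

lemma integral_id_eq_mul_add_integral_sub {μ : Measure ℝ} [IsFiniteMeasure μ]
    (hμ : Integrable id μ) (φ : ℝ) : ∫ y, y ∂μ = φ * μ.real univ + ∫ y, (y - φ) ∂μ := by
  rw [integral_sub (f := fun y => y) hμ (integrable_const φ), integral_const, smul_eq_mul]
  ring

lemma integral_max_sub_eq_setIntegral_Ioi (ν : Measure ℝ) (φ : ℝ) :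
    ∫ y, max (y - φ) 0 ∂ν = ∫ y in Ioi φ, (y - φ) ∂ν := by
  rw [← integral_indicator measurableSet_Ioi]
  congr with y
  rcases lt_or_ge φ y with hy | hy
  · simp [indicator, hy, hy.le]
  · simp [indicator, hy, hy.not_gt]

lemma exists_le_of_coupling {ν : Measure ℝ} {π : Measure (ℝ × Bool)}
    (hπ : π.map Prod.fst = ν) :
    ∃ μ ≤ ν, μ.real univ = π.real (univ ×ˢ {true}) ∧
      ∫ y, y ∂μ = ∫ yd, (if yd.2 = true then yd.1 else 0) ∂π := by
  have hT : MeasurableSet (univ ×ˢ {true} : Set (ℝ × Bool)) :=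
    MeasurableSet.univ.prod (.singleton true)
  refine ⟨(π.restrict (univ ×ˢ {true})).map Prod.fst,
    hπ ▸ Measure.map_mono Measure.restrict_le_self measurable_fst, ?_, ?_⟩
  · rw [measureReal_def, Measure.map_apply measurable_fst .univ, preimage_univ,
      Measure.restrict_apply_univ, measureReal_def]
  · rw [integral_map (f := fun y => y) measurable_fst.aemeasurable aestronglyMeasurable_id,
      ← integral_indicator hT]
    congr with yd
    simp [indicator]

lemma exists_coupling_of_le {μ ν : Measure ℝ} [IsProbabilityMeasure ν] (hν : Integrable id ν)
    (hμν : μ ≤ ν) :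
    ∃ π : Measure (ℝ × Bool), IsProbabilityMeasure π ∧ π.map Prod.fst = ν ∧
      π.real (univ ×ˢ {true}) = μ.real univ ∧
      ∫ yd, (if yd.2 = true then yd.1 else 0) ∂π = ∫ y, y ∂μ := by
  have ht : Measurable (fun y : ℝ => (y, true)) := by fun_prop
  have hf : Measurable (fun y : ℝ => (y, false)) := by fun_prop
  have hT : MeasurableSet (univ ×ˢ {true} : Set (ℝ × Bool)) :=
    MeasurableSet.univ.prod (.singleton true)
  have hg : Measurable (fun yd : ℝ × Bool => if yd.2 = true then yd.1 else 0) :=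
    Measurable.ite (measurableSet_eq_fun measurable_snd measurable_const) measurable_fst
      measurable_const
  have : IsFiniteMeasure μ := isFiniteMeasure_of_le ν hμν
  set π := μ.map (·, true) + (ν - μ).map (·, false)
  have hmap : π.map Prod.fst = ν := by
    rw [Measure.map_add _ _ measurable_fst, Measure.map_map measurable_fst ht,
      Measure.map_map measurable_fst hf]
    simp only [Function.comp_def, Measure.map_id']
    exact (add_comm _ _).trans (Measure.sub_add_cancel_of_le hμν)
  refine ⟨π, ?_, hmap, ?_, ?_⟩
  · constructor
    simpa [Measure.map_apply measurable_fst MeasurableSet.univ] using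
      congrArg (fun m : Measure ℝ => m univ) hmap
  · simp [π, measureReal_def, Measure.map_apply ht hT, Measure.map_apply hf hT]
  · have hμ : Integrable (fun y => y) μ := hν.mono_measure hμν
    have h1 : Integrable (fun yd : ℝ × Bool => if yd.2 = true then yd.1 else 0)
        (μ.map (·, true)) :=
      (integrable_map_measure hg.aestronglyMeasurable ht.aemeasurable).mpr hμ
    have h2 : Integrable (fun yd : ℝ × Bool => if yd.2 = true then yd.1 else 0)
        ((ν - μ).map (·, false)) :=
      (integrable_map_measure hg.aestronglyMeasurable hf.aemeasurable).mpr (integrable_zero _ _ _)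
    rw [integral_add_measure h1 h2, integral_map ht.aemeasurable hg.aestronglyMeasurable,
      integral_map hf.aemeasurable hg.aestronglyMeasurable]
    simp

lemma couplingValues_eq {ν : Measure ℝ} [IsProbabilityMeasure ν] (hν : Integrable id ν) (q : ℝ) :
    {r : ℝ | ∃ π : Measure (ℝ × Bool), IsProbabilityMeasure π ∧
        π.map Prod.fst = ν ∧ (π (Set.univ ×ˢ {true})).toReal = q ∧
        r = ∫ yd : ℝ × Bool, (if yd.2 = true then yd.1 else 0) ∂π} =
      {r | ∃ μ ≤ ν, μ.real univ = q ∧ r = ∫ y, y ∂μ} := by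
  ext r
  constructor
  · rintro ⟨π, -, hπ, rfl, rfl⟩
    obtain ⟨μ, hμν, hmass, hint⟩ := exists_le_of_coupling hπ
    exact ⟨μ, hμν, hmass, hint.symm⟩
  · rintro ⟨μ, hμν, rfl, rfl⟩
    obtain ⟨π, hπ, hmap, hmass, hint⟩ := exists_coupling_of_le hν hμν
    exact ⟨π, hπ, hmap, hmass, hint.symm⟩

lemma integral_id_le_dualObjective {μ ν : Measure ℝ} [IsFiniteMeasure ν] (hμν : μ ≤ ν)
    (hν : Integrable id ν) (φ : ℝ) : ∫ y, y ∂μ ≤ dualObjective ν (μ.real univ) φ := by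
  have : IsFiniteMeasure μ := isFiniteMeasure_of_le ν hμν
  have hμ : Integrable id μ := hν.mono_measure hμν
  have hpos : Integrable (fun y => max (y - φ) 0) ν := (hν.sub (integrable_const φ)).pos_part
  rw [integral_id_eq_mul_add_integral_sub hμ φ, dualObjective, mul_comm]
  gcongr
  calc ∫ y, (y - φ) ∂μ ≤ ∫ y, max (y - φ) 0 ∂μ :=
        integral_mono (hμ.sub (integrable_const φ)) (hpos.mono_measure hμν)
          fun y => le_max_left _ _
    _ ≤ ∫ y, max (y - φ) 0 ∂ν :=
        integral_mono_measure hμν (ae_of_all _ fun y => le_max_right _ _) hpos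

lemma exists_le_integral_eq_dualObjective {ν : Measure ℝ} [IsFiniteMeasure ν]
    (hν : Integrable id ν) {q φ : ℝ} (hφ₁ : ν.real (Ioi φ) ≤ q) (hφ₂ : q ≤ ν.real (Ici φ)) :
    ∃ μ ≤ ν, μ.real univ = q ∧ ∫ y, y ∂μ = dualObjective ν q φ := by
  have hdisj : Disjoint (Ioi φ) {φ} := disjoint_singleton_right.mpr (lt_irrefl φ)
  rw [← Ioi_union_left, measureReal_union hdisj (measurableSet_singleton φ)] at hφ₂
  obtain ⟨c, hc1, hc⟩ : ∃ c : ℝ≥0, c ≤ 1 ∧ c * ν.real {φ} = q - ν.real (Ioi φ) := by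
    rcases (measureReal_nonneg (μ := ν) (s := {φ})).eq_or_lt with h | h
    · exact ⟨0, zero_le_one, by rw [← h] at hφ₂; simp only [NNReal.coe_zero, zero_mul]; linarith⟩
    · refine ⟨((q - ν.real (Ioi φ)) / ν.real {φ}).toNNReal, ?_, ?_⟩
      · exact Real.toNNReal_le_one.mpr ((div_le_one h).mpr (by linarith))
      · rw [Real.coe_toNNReal _ (div_nonneg (sub_nonneg.mpr hφ₁) h.le), div_mul_cancel₀ _ h.ne']
  set μ := ν.restrict (Ioi φ) + c • ν.restrict {φ}
  have hμν : μ ≤ ν := calc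
    μ ≤ ν.restrict (Ioi φ) + ν.restrict {φ} := add_le_add le_rfl (smul_measure_le_self _ hc1)
    _ = ν.restrict (Ici φ) := by
      rw [← Ioi_union_left, Measure.restrict_union hdisj (measurableSet_singleton φ)]
    _ ≤ ν := Measure.restrict_le_self
  have hmass : μ.real univ = q := by
    rw [measureReal_def, Measure.add_apply,
      ENNReal.toReal_add (measure_ne_top _ _) (measure_ne_top _ _), ← measureReal_def,
      ← measureReal_def, measureReal_nnreal_smul_apply, measureReal_restrict_apply_univ,
      measureReal_restrict_apply_univ, hc]
    ring
  have : IsFiniteMeasure μ := isFiniteMeasure_of_le ν hμν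
  refine ⟨μ, hμν, hmass, ?_⟩
  rw [integral_id_eq_mul_add_integral_sub (hν.mono_measure hμν) φ, hmass, dualObjective,
    integral_max_sub_eq_setIntegral_Ioi, integral_add_measure, integral_smul_nnreal_measure,
    integral_singleton]
  · simp
  · exact (hν.sub (integrable_const φ)).restrict
  · exact ((hν.sub (integrable_const φ)).restrict).smul_measure_nnreal

lemma tendsto_dualObjective_zero_atTop {ν : Measure ℝ} (hν : Integrable id ν) :
    Tendsto (dualObjective ν 0) atTop (𝓝 0) :=
  (tendsto_integral_max_sub_atTop hν).congr fun φ => by simp [dualObjective]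

lemma tendsto_dualObjective_one_atBot {ν : Measure ℝ} [IsProbabilityMeasure ν]
    (hν : Integrable id ν) : Tendsto (dualObjective ν 1) atBot (𝓝 (∫ y, y ∂ν)) := by
  have h (φ : ℝ) : ∫ y, y ∂ν + ∫ y, max (-y - -φ) 0 ∂ν = dualObjective ν 1 φ := by
    have h₁ : Integrable (fun y => max (-y - -φ) 0) ν :=
      (hν.neg.sub (integrable_const (-φ))).pos_part
    have h₂ : Integrable (fun y => max (y - φ) 0) ν := (hν.sub (integrable_const φ)).pos_part
    calc ∫ y, y ∂ν + ∫ y, max (-y - -φ) 0 ∂ν = ∫ y, (y + max (-y - -φ) 0) ∂ν :=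
          (integral_add hν h₁).symm
      _ = ∫ y, (φ + max (y - φ) 0) ∂ν := integral_congr_ae <| ae_of_all _ fun y => by
          change y + max (-y - -φ) 0 = φ + max (y - φ) 0
          rcases le_total y φ with h | h
          · rw [max_eq_left (by linarith), max_eq_right (by linarith)]; ring
          · rw [max_eq_right (by linarith), max_eq_left (by linarith)]; ring
      _ = dualObjective ν 1 φ := by
          rw [integral_add (integrable_const φ) h₂, integral_const, probReal_univ, smul_eq_mul,
            dualObjective]
          ring
  simpa using (tendsto_const_nhds.add
    ((tendsto_integral_max_sub_atTop hν.neg).comp tendsto_neg_atBot_atTop)).congr h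

lemma exists_le_measureReal_univ_eq (ν : Measure ℝ) [IsProbabilityMeasure ν] {q : ℝ}
    (hq0 : 0 ≤ q) (hq1 : q ≤ 1) : ∃ μ ≤ ν, μ.real univ = q :=
  ⟨q.toNNReal • ν, smul_measure_le_self ν (Real.toNNReal_le_one.mpr hq1), by simp [hq0]⟩

lemma bddBelow_range_dualObjective {ν : Measure ℝ} [IsProbabilityMeasure ν]
    (hν : Integrable id ν) {q : ℝ} (hq0 : 0 ≤ q) (hq1 : q ≤ 1) :
    BddBelow (range (dualObjective ν q)) := by
  obtain ⟨μ, hμν, rfl⟩ := exists_le_measureReal_univ_eq ν hq0 hq1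
  exact ⟨∫ y, y ∂μ, forall_mem_range.mpr (integral_id_le_dualObjective hμν hν)⟩

lemma exists_le_iInf_dualObjective_le_integral {ν : Measure ℝ} [IsProbabilityMeasure ν]
    (hν : Integrable id ν) {q : ℝ} (hq0 : 0 ≤ q) (hq1 : q ≤ 1) :
    ∃ μ ≤ ν, μ.real univ = q ∧ ⨅ φ, dualObjective ν q φ ≤ ∫ y, y ∂μ := by
  have hinf_le := ciInf_le (bddBelow_range_dualObjective hν hq0 hq1)
  rcases hq0.eq_or_lt with rfl | hq0
  · exact ⟨0, Measure.zero_le ν, by simp,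
      by simpa using ge_of_tendsto (tendsto_dualObjective_zero_atTop hν) (.of_forall hinf_le)⟩
  rcases hq1.eq_or_lt with rfl | hq1
  · exact ⟨ν, le_rfl, probReal_univ,
      ge_of_tendsto (tendsto_dualObjective_one_atBot hν) (.of_forall hinf_le)⟩
  obtain ⟨φ, hφ₁, hφ₂⟩ := exists_measureReal_Ioi_le_le_measureReal_Ici ν hq0 hq1
  obtain ⟨μ, hμν, hμ, hint⟩ := exists_le_integral_eq_dualObjective hν hφ₁ hφ₂
  exact ⟨μ, hμν, hμ, hint ▸ hinf_le φ⟩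

/-- Strong duality (upper bound): among all couplings `π` of a fixed real marginal `ν`
with a `Bernoulli(q)` marginal for a Boolean coordinate, the supremum of
`∫ y · 1{d = true} dπ` equals `inf_φ (φ q + ∫ max(y − φ, 0) dν)`. -/
theorem stmt3 (ν : Measure ℝ) [IsProbabilityMeasure ν] (hν : Integrable id ν)
    (q : ℝ) (hq0 : 0 ≤ q) (hq1 : q ≤ 1) :
    sSup {r : ℝ | ∃ π : Measure (ℝ × Bool), IsProbabilityMeasure π ∧
        π.map Prod.fst = ν ∧ (π (Set.univ ×ˢ {true})).toReal = q ∧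
        r = ∫ yd : ℝ × Bool, (if yd.2 = true then yd.1 else 0) ∂π} =
      ⨅ φ : ℝ, (φ * q + ∫ y, max (y - φ) 0 ∂ν) := by
  rw [couplingValues_eq hν q]
  change _ = ⨅ φ, dualObjective ν q φ
  have hweak : ∀ r ∈ {r | ∃ μ ≤ ν, μ.real univ = q ∧ r = ∫ y, y ∂μ}, ∀ φ,
      r ≤ dualObjective ν q φ := by
    rintro _ ⟨μ, hμν, rfl, rfl⟩ φ
    exact integral_id_le_dualObjective hμν hν φ
  obtain ⟨μ, hμν, hμ, hinf⟩ := exists_le_iInf_dualObjective_le_integral hν hq0 hq1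
  exact le_antisymm (csSup_le ⟨_, μ, hμν, hμ, rfl⟩ fun r hr => le_ciInf (hweak r hr))
    (hinf.trans (le_csSup ⟨_, fun r hr => hweak r hr 0⟩ ⟨μ, hμν, hμ, rfl⟩))
end

section
/- Let (E, 𝒜, λ) be a measure space, let f, g : E → ℝ be nonnegative integrable functions, let m : E → ℝ be measurable with 0 ≤ m(p) ≤ 1 for all p, and set e := ∫ (1 − m)·g dλ. Then for every φ ∈ ℝ: ∫ min(φ·g, f) dλ − φ·e ≤ ∫ m·f dλ. (The integrand min(φ·g, f) is integrable since |min(φ·g, f)| ≤ |φ|·g + f, and m·f is integrable since 0 ≤ m·f ≤ f.) -/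
open MeasureTheory

theorem min_le_mul_add_one_sub_mul {t : ℝ} (ht0 : 0 ≤ t) (ht1 : t ≤ 1) (a b : ℝ) :
    min a b ≤ t * b + (1 - t) * a := by
  have ha : t * min a b ≤ t * b := mul_le_mul_of_nonneg_left (min_le_right a b) ht0
  have hb : (1 - t) * min a b ≤ (1 - t) * a :=
    mul_le_mul_of_nonneg_left (min_le_left a b) (sub_nonneg.mpr ht1)
  linarith

theorem stmt5_general {E : Type*} [MeasurableSpace E] (lam : Measure E)
    (f g m : E → ℝ) (hf : Integrable f lam) (hg : Integrable g lam)
    (hm : Measurable m) (hm0 : ∀ p, 0 ≤ m p) (hm1 : ∀ p, m p ≤ 1) (φ : ℝ) :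
    (∫ p, min (φ * g p) (f p) ∂lam) - φ * (∫ p, (1 - m p) * g p ∂lam) ≤
      ∫ p, m p * f p ∂lam := by
  have hmf : Integrable (fun p => m p * f p) lam :=
    hf.bdd_mul hm.aestronglyMeasurable (c := 1) <| .of_forall fun p => by
      rw [Real.norm_of_nonneg (hm0 p)]; exact hm1 p
  have hmg : Integrable (fun p => (1 - m p) * g p) lam :=
    hg.bdd_mul (measurable_const.sub hm).aestronglyMeasurable (c := 1) <| .of_forall fun p => by
      rw [Real.norm_of_nonneg (sub_nonneg.mpr (hm1 p))]; linarith [hm0 p]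
  have hmin : Integrable (fun p => min (φ * g p) (f p)) lam := (hg.const_mul φ).inf hf
  have key : ∫ p, min (φ * g p) (f p) ∂lam ≤ ∫ p, m p * f p + φ * ((1 - m p) * g p) ∂lam :=
    integral_mono hmin (hmf.add (hmg.const_mul φ)) fun p => by
      have := min_le_mul_add_one_sub_mul (hm0 p) (hm1 p) (φ * g p) (f p)
      dsimp only; linarith
  rw [integral_add hmf (hmg.const_mul φ), integral_const_mul] at key
  linarith

/-- Lower bound on the average structural function `∫ m f dλ` in measure-theoretic form:
for nonnegative integrable densities `f, g`, a structural function `0 ≤ m ≤ 1`, and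
`e = ∫ (1 − m) g dλ`, every `φ ∈ ℝ` yields `∫ min(φ g, f) dλ − φ e ≤ ∫ m f dλ`. -/
theorem stmt5 {E : Type*} [MeasurableSpace E] (lam : Measure E)
    (f g m : E → ℝ) (hf : Integrable f lam) (hg : Integrable g lam)
    (hf0 : ∀ p, 0 ≤ f p) (hg0 : ∀ p, 0 ≤ g p)
    (hm : Measurable m) (hm0 : ∀ p, 0 ≤ m p) (hm1 : ∀ p, m p ≤ 1) (φ : ℝ) :
    (∫ p, min (φ * g p) (f p) ∂lam) - φ * (∫ p, (1 - m p) * g p ∂lam) ≤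
      ∫ p, m p * f p ∂lam :=
  stmt5_general lam f g m hf hg hm hm0 hm1 φ
end

section
/- Let (E, 𝒜, λ) be a measure space, let f, g : E → ℝ be nonnegative integrable functions, let m : E → ℝ be measurable with 0 ≤ m(p) ≤ 1 for all p, and set e := ∫ (1 − m)·g dλ. Then for every φ ∈ ℝ: ∫ m·f dλ ≤ ∫ max(−φ·g, f) dλ + φ·e. (The integrand max(−φ·g, f) is integrable since |max(−φ·g, f)| ≤ |φ|·g + f, and m·f is integrable since 0 ≤ m·f ≤ f.) -/
open MeasureTheory

/-- If `f ≥ -φ g` this is `(1 - m) (f + φ g) ≥ 0`, otherwise it is `m (f + φ g) ≤ 0`. -/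
lemma mul_le_max_neg_mul_add_mul_one_sub_mul {m f g : ℝ} (hm0 : 0 ≤ m) (hm1 : m ≤ 1) (φ : ℝ) :
    m * f ≤ max (-φ * g) f + φ * ((1 - m) * g) := by
  rcases le_total (-φ * g) f with h | h
  · rw [max_eq_right h]
    nlinarith
  · rw [max_eq_left h]
    nlinarith

theorem stmt6_general {E : Type*} [MeasurableSpace E] (lam : Measure E)
    (f g m : E → ℝ) (hf : Integrable f lam) (hg : Integrable g lam)
    (hm : Measurable m) (hm0 : ∀ p, 0 ≤ m p) (hm1 : ∀ p, m p ≤ 1) (φ : ℝ) :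
    ∫ p, m p * f p ∂lam ≤
      (∫ p, max (-φ * g p) (f p) ∂lam) + φ * (∫ p, (1 - m p) * g p ∂lam) := by
  have hmf : Integrable (fun p => m p * f p) lam :=
    hf.bdd_mul (c := 1) hm.aestronglyMeasurable
      (.of_forall fun p => abs_le.mpr ⟨by linarith [hm0 p], hm1 p⟩)
  have hmg : Integrable (fun p => (1 - m p) * g p) lam :=
    hg.bdd_mul (c := 1) (aestronglyMeasurable_const.sub hm.aestronglyMeasurable)
      (.of_forall fun p => abs_le.mpr ⟨by linarith [hm1 p], by linarith [hm0 p]⟩)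
  have hmax : Integrable (fun p => max (-φ * g p) (f p)) lam := (hg.const_mul (-φ)).sup hf
  calc ∫ p, m p * f p ∂lam
      ≤ ∫ p, (max (-φ * g p) (f p) + φ * ((1 - m p) * g p)) ∂lam :=
        integral_mono hmf (hmax.add (hmg.const_mul φ)) fun p =>
          mul_le_max_neg_mul_add_mul_one_sub_mul (hm0 p) (hm1 p) φ
    _ = (∫ p, max (-φ * g p) (f p) ∂lam) + φ * (∫ p, (1 - m p) * g p ∂lam) := by
        rw [integral_add hmax (hmg.const_mul φ), integral_const_mul]

/-- Upper bound on the average structural function `∫ m f dλ` in measure-theoretic form: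
for nonnegative integrable densities `f, g`, a structural function `0 ≤ m ≤ 1`, and
`e = ∫ (1 − m) g dλ`, every `φ ∈ ℝ` yields `∫ m f dλ ≤ ∫ max(−φ g, f) dλ + φ e`. -/
theorem stmt6 {E : Type*} [MeasurableSpace E] (lam : Measure E)
    (f g m : E → ℝ) (hf : Integrable f lam) (hg : Integrable g lam)
    (hf0 : ∀ p, 0 ≤ f p) (hg0 : ∀ p, 0 ≤ g p)
    (hm : Measurable m) (hm0 : ∀ p, 0 ≤ m p) (hm1 : ∀ p, m p ≤ 1) (φ : ℝ) :
    ∫ p, m p * f p ∂lam ≤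
      (∫ p, max (-φ * g p) (f p) ∂lam) + φ * (∫ p, (1 - m p) * g p ∂lam) :=
  stmt6_general lam f g m hf hg hm hm0 hm1 φ
end

section
/- Let (E, 𝒜, λ) be a measure space, let f, g : E → ℝ be measurable, and let u, v : E → ℝ be integrable. Then lim_{t → 0⁺} (1/t) · ∫ ( max(f + t·u, g + t·v) − max(f, g) ) dλ = ∫_{ {f > g} } u dλ + ∫_{ {f < g} } v dλ + ∫_{ {f = g} } max(u, v) dλ. In particular the one-sided limit exists. -/
open MeasureTheory Filter Topology

/-!
For `t > 0` small, `max (a + t x) (b + t y)` is exactly `max a b + t * d`, where `d` is `x`, `y`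
or `max x y` according to whether `a > b`, `a < b` or `a = b`; so the pointwise difference
quotients are eventually constant. They are bounded by `max |x| |y|` since `max` is
1-Lipschitz for the sup-norm, and dominated convergence gives the integrated formula.
-/

/-- The right derivative at `0` of `t ↦ max (a + t * x) (b + t * y)`. -/
noncomputable def maxDirDeriv (a b x y : ℝ) : ℝ :=
  if b < a then x else if a < b then y else max x y

theorem eventually_max_add_mul_eq (a b x y : ℝ) :
    ∀ᶠ t in 𝓝[>] (0 : ℝ), max (a + t * x) (b + t * y) = max a b + t * maxDirDeriv a b x y := by
  rcases lt_trichotomy a b with hab | rfl | hab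
  · have hlt : ∀ᶠ t in 𝓝 (0 : ℝ), a + t * x < b + t * y :=
      ContinuousAt.eventually_lt (by fun_prop) (by fun_prop) (by simpa using hab)
    filter_upwards [nhdsWithin_le_nhds hlt] with t ht
    simp [maxDirDeriv, hab, hab.not_gt, max_eq_right ht.le, max_eq_right hab.le]
  · filter_upwards [self_mem_nhdsWithin] with t (ht : 0 < t)
    simp [maxDirDeriv, max_add_add_left, mul_max_of_nonneg _ _ ht.le]
  · have hlt : ∀ᶠ t in 𝓝 (0 : ℝ), b + t * y < a + t * x :=
      ContinuousAt.eventually_lt (by fun_prop) (by fun_prop) (by simpa using hab)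
    filter_upwards [nhdsWithin_le_nhds hlt] with t ht
    simp [maxDirDeriv, hab, max_eq_left ht.le, max_eq_left hab.le]

theorem tendsto_slope_max_add_mul (a b x y : ℝ) :
    Tendsto (fun t : ℝ => (1 / t) * (max (a + t * x) (b + t * y) - max a b)) (𝓝[>] 0)
      (𝓝 (maxDirDeriv a b x y)) := by
  refine tendsto_const_nhds.congr' ?_
  filter_upwards [eventually_max_add_mul_eq a b x y, self_mem_nhdsWithin]
    with t heq (ht : 0 < t)
  rw [heq]
  field_simp
  ring

theorem abs_slope_max_add_mul_le (a b x y : ℝ) {t : ℝ} (ht : 0 < t) :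
    |(1 / t) * (max (a + t * x) (b + t * y) - max a b)| ≤ max |x| |y| := by
  have hlip := abs_max_sub_max_le_max (a + t * x) (b + t * y) a b
  simp only [add_sub_cancel_left, abs_mul, abs_of_pos ht, ← mul_max_of_nonneg _ _ ht.le] at hlip
  rw [abs_mul, abs_of_pos (one_div_pos.mpr ht)]
  calc 1 / t * |max (a + t * x) (b + t * y) - max a b|
      ≤ 1 / t * (t * max |x| |y|) := by gcongr
    _ = max |x| |y| := by field_simp

theorem tendsto_integral_slope_max_add_mul {E : Type*} [MeasurableSpace E] (μ : Measure E)
    {f g u v : E → ℝ} (hf : AEMeasurable f μ) (hg : AEMeasurable g μ)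
    (hu : Integrable u μ) (hv : Integrable v μ) :
    Tendsto
      (fun t : ℝ => (1 / t) * ∫ p, (max (f p + t * u p) (g p + t * v p) - max (f p) (g p)) ∂μ)
      (𝓝[>] 0) (𝓝 (∫ p, maxDirDeriv (f p) (g p) (u p) (v p) ∂μ)) := by
  have hDCT : Tendsto
      (fun t : ℝ => ∫ p, (1 / t) * (max (f p + t * u p) (g p + t * v p) - max (f p) (g p)) ∂μ)
      (𝓝[>] 0) (𝓝 (∫ p, maxDirDeriv (f p) (g p) (u p) (v p) ∂μ)) := by
    refine tendsto_integral_filter_of_dominated_convergence (fun p => max |u p| |v p|)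
      (Eventually.of_forall fun t => ?_) ?_ (hu.abs.sup hv.abs)
      (Eventually.of_forall fun p => tendsto_slope_max_add_mul _ _ _ _)
    · exact ((((hf.add (hu.aemeasurable.const_mul t)).max
        (hg.add (hv.aemeasurable.const_mul t))).sub (hf.max hg)).const_mul _).aestronglyMeasurable
    · filter_upwards [self_mem_nhdsWithin] with t (ht : 0 < t)
      exact Eventually.of_forall fun p => abs_slope_max_add_mul_le _ _ _ _ ht
  exact hDCT.congr fun t => integral_const_mul _ _

theorem integral_maxDirDeriv {E : Type*} [MeasurableSpace E] (μ : Measure E)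
    {f g u v : E → ℝ} (hf : Measurable f) (hg : Measurable g)
    (hu : Integrable u μ) (hv : Integrable v μ) :
    ∫ p, maxDirDeriv (f p) (g p) (u p) (v p) ∂μ =
      (∫ p in {p | g p < f p}, u p ∂μ) + (∫ p in {p | f p < g p}, v p ∂μ)
        + ∫ p in {p | f p = g p}, max (u p) (v p) ∂μ := by
  have hA := measurableSet_lt hg hf
  have hB := measurableSet_lt hf hg
  have hC := measurableSet_eq_fun hf hg
  have hsplit : (fun p => maxDirDeriv (f p) (g p) (u p) (v p)) = fun p =>
      {p | g p < f p}.indicator u p + {p | f p < g p}.indicator v p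
        + {p | f p = g p}.indicator (fun q => max (u q) (v q)) p := by
    ext p
    rcases lt_trichotomy (f p) (g p) with h | h | h
    · simp [maxDirDeriv, Set.indicator, h, h.not_gt, h.ne]
    · simp [maxDirDeriv, Set.indicator, h]
    · simp [maxDirDeriv, Set.indicator, h, h.not_gt, h.ne']
  have hmax : Integrable (fun p => {p | f p = g p}.indicator (fun q => max (u q) (v q)) p) μ :=
    (hu.sup hv).indicator hC
  have hAB : Integrable
      (fun p => {p | g p < f p}.indicator u p + {p | f p < g p}.indicator v p) μ :=
    (hu.indicator hA).add (hv.indicator hB)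
  rw [hsplit, integral_add hAB hmax,
    integral_add (hu.indicator hA) (hv.indicator hB),
    integral_indicator hA, integral_indicator hB, integral_indicator hC]

/-- Danskin-type formula: the one-sided directional derivative at `t = 0⁺` of
`t ↦ ∫ max(f + t u, g + t v) dλ` equals
`∫_{f > g} u + ∫_{f < g} v + ∫_{f = g} max(u, v)`. -/
theorem stmt12 {E : Type*} [MeasurableSpace E] (lam : Measure E)
    (f g : E → ℝ) (hf : Measurable f) (hg : Measurable g)
    (u v : E → ℝ) (hu : Integrable u lam) (hv : Integrable v lam) :
    Tendsto
      (fun t : ℝ =>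
        (1 / t) * ∫ p, (max (f p + t * u p) (g p + t * v p) - max (f p) (g p)) ∂lam)
      (nhdsWithin 0 (Set.Ioi 0))
      (nhds ((∫ p in {p | g p < f p}, u p ∂lam) + (∫ p in {p | f p < g p}, v p ∂lam)
        + ∫ p in {p | f p = g p}, max (u p) (v p) ∂lam)) := by
  rw [← integral_maxDirDeriv lam hf hg hu hv]
  exact tendsto_integral_slope_max_add_mul lam hf.aemeasurable hg.aemeasurable hu hv
end
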